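/- Composition of simultaneous dual-context substitutions is well-typed: given (σ'; δ') a dual substitution from Ψ'; Γ' to Ψ''; Γ'' and (σ; δ) a dual substitution from Ψ; Γ to Ψ'; Γ', their composite (σ' ∘ σ ; (δ'[σ]) ∘ δ) is a dual substitution from Ψ; Γ to Ψ''; Γ''. -/

import Mathlib

/-- Simple types: natural numbers, box modality, functions. -/
inductive Ty : Type
  | nat : Ty
  | box : Ty → Ty
  | arr : Ty → Ty → Ty

/-- Core types: built only from `nat` and arrows (no box). -/
inductive Core : Ty → Prop
  | nat : Core .nat
  | arr : ∀ {S T}, Core S → Core T → Core (.arr S T)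

/-- Layer-1 types: boxes may occur, but only over core types. -/
inductive Type1 : Ty → Prop
  | nat : Type1 .nat
  | arr : ∀ {S T}, Type1 S → Type1 T → Type1 (.arr S T)
  | box : ∀ {T}, Core T → Type1 (.box T)

/-- A context all of whose types are core. -/
def CoreCtx (Γ : List Ty) : Prop := ∀ T ∈ Γ, Core T

/-- A context all of whose types are layer-1 types. -/
def Type1Ctx (Γ : List Ty) : Prop := ∀ T ∈ Γ, Type1 T

/-- Terms (de Bruijn indices, separate local variables `var` and global variables `gvar`). -/
inductive Tm : Type
  | var : ℕ → Tm
  | gvar : ℕ → Tm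
  | zero : Tm
  | succ : Tm → Tm
  | box : Tm → Tm
  | letbox : Tm → Tm → Tm
  | lam : Tm → Tm
  | app : Tm → Tm → Tm

/-- Layered typing judgment `Ψ; Γ ⊢ᵢ t : T` of the 2-layered dual-context modal type theory.
`Ψ` is the global context, `Γ` the local context, `i ∈ {0,1}` the layer. -/
inductive Typing : List Ty → List Ty → Fin 2 → Tm → Ty → Prop
  | var0 : ∀ {Ψ Γ x T}, CoreCtx Ψ → CoreCtx Γ → Γ[x]? = some T → Typing Ψ Γ 0 (.var x) T
  | var1 : ∀ {Ψ Γ x T}, CoreCtx Ψ → Type1Ctx Γ → Γ[x]? = some T → Typing Ψ Γ 1 (.var x) T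
  | gvar0 : ∀ {Ψ Γ u T}, CoreCtx Ψ → CoreCtx Γ → Ψ[u]? = some T → Typing Ψ Γ 0 (.gvar u) T
  | gvar1 : ∀ {Ψ Γ u T}, CoreCtx Ψ → Type1Ctx Γ → Ψ[u]? = some T → Typing Ψ Γ 1 (.gvar u) T
  | zero0 : ∀ {Ψ Γ}, CoreCtx Ψ → CoreCtx Γ → Typing Ψ Γ 0 .zero .nat
  | zero1 : ∀ {Ψ Γ}, CoreCtx Ψ → Type1Ctx Γ → Typing Ψ Γ 1 .zero .nat
  | succ : ∀ {Ψ Γ i t}, Typing Ψ Γ i t .nat → Typing Ψ Γ i (.succ t) .nat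
  | lam : ∀ {Ψ Γ i t S T}, Typing Ψ (S :: Γ) i t T → Typing Ψ Γ i (.lam t) (.arr S T)
  | app : ∀ {Ψ Γ i t s S T},
      Typing Ψ Γ i t (.arr S T) → Typing Ψ Γ i s S → Typing Ψ Γ i (.app t s) T
  | box : ∀ {Ψ Γ t T}, Type1Ctx Γ → Typing Ψ [] 0 t T → Typing Ψ Γ 1 (.box t) (.box T)
  | letbox : ∀ {Ψ Γ s t T T'},
      Typing Ψ Γ 1 s (.box T) → Typing (T :: Ψ) Γ 1 t T' →
      Typing Ψ Γ 1 (.letbox s t) T'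

/-- Lift a renaming under a binder. -/
def liftR (f : ℕ → ℕ) : ℕ → ℕ
  | 0 => 0
  | n + 1 => f n + 1

/-- Simultaneous renaming of global variables (by `g`) and local variables (by `l`).
Local renaming is reset under `box` (boxed terms are locally closed); the global
renaming is lifted under the `letbox` binder and the local renaming under `lam`. -/
def rename (g l : ℕ → ℕ) : Tm → Tm
  | .var x => .var (l x)
  | .gvar u => .gvar (g u)
  | .zero => .zero
  | .succ t => .succ (rename g l t)
  | .box t => .box (rename g id t)
  | .letbox s t => .letbox (rename g l s) (rename (liftR g) l t)
  | .lam t => .lam (rename g (liftR l) t)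
  | .app t s => .app (rename g l t) (rename g l s)

/-- Shift indices `≥ c` up by one. -/
def shiftFn (c x : ℕ) : ℕ := if x < c then x else x + 1

/-- Shift local variables `≥ c` of a term up by one. -/
def lshift (c : ℕ) (t : Tm) : Tm := rename id (shiftFn c) t

/-- Shift global variables `≥ c` of a term up by one. -/
def gshift (c : ℕ) (t : Tm) : Tm := rename (shiftFn c) id t

/-- Lookup in a substitution (list of terms), with a default. -/
def lookupT (σ : List Tm) (u : ℕ) (dflt : Tm) : Tm :=
  match σ, u with
  | [], _ => dflt
  | t :: _, 0 => t
  | _ :: σ, u + 1 => lookupT σ u dflt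

/-- Typing of simultaneous global substitutions: `Ψ ⊢ σ : Φ`, each component
closed and typed at layer 0. -/
inductive GSubTy : List Ty → List Tm → List Ty → Prop
  | nil : ∀ {Ψ}, CoreCtx Ψ → GSubTy Ψ [] []
  | cons : ∀ {Ψ σ Φ t T}, GSubTy Ψ σ Φ → Typing Ψ [] 0 t T →
      GSubTy Ψ (t :: σ) (T :: Φ)

/-- Application of a simultaneous global substitution: `x[σ] = x`, `u[σ] = σ(u)`,
it commutes with `zero`, `succ`, `lam`, application and `box`, and under `letbox`
the substitution is extended with `u/u` (de Bruijn: `gvar 0` consed onto the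
globally shifted substitution). -/
def applyG (σ : List Tm) : Tm → Tm
  | .var x => .var x
  | .gvar u => lookupT σ u (.gvar u)
  | .zero => .zero
  | .succ t => .succ (applyG σ t)
  | .box t => .box (applyG σ t)
  | .letbox a b => .letbox (applyG σ a) (applyG (.gvar 0 :: σ.map (gshift 0)) b)
  | .lam t => .lam (applyG σ t)
  | .app a b => .app (applyG σ a) (applyG σ b)

/-- Typing of simultaneous local substitutions: `Ψ; Γ ⊢ δ : Δ`, each component
typed at layer 1. -/
inductive LSubTy : List Ty → List Ty → List Tm → List Ty → Prop
  | nil : ∀ {Ψ Γ}, CoreCtx Ψ → Type1Ctx Γ → LSubTy Ψ Γ [] []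
  | cons : ∀ {Ψ Γ δ Δ t T}, LSubTy Ψ Γ δ Δ → Typing Ψ Γ 1 t T →
      LSubTy Ψ Γ (t :: δ) (T :: Δ)

/-- Application of a simultaneous local substitution: `x[δ] = δ(x)`, global
variables are untouched, it does not go under `box`, the global variables of `δ`
are shifted under `letbox`, and `δ` is extended under `lam`. -/
def applyL (δ : List Tm) : Tm → Tm
  | .var x => lookupT δ x (.var x)
  | .gvar u => .gvar u
  | .zero => .zero
  | .succ t => .succ (applyL δ t)
  | .box t => .box t
  | .letbox a b => .letbox (applyL δ a) (applyL (δ.map (gshift 0)) b)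
  | .lam t => .lam (applyL (.var 0 :: δ.map (lshift 0)) t)
  | .app a b => .app (applyL δ a) (applyL δ b)

/-- Composition of global substitutions: apply `σ` to every component of `σ'`. -/
def gcomp (σ' σ : List Tm) : List Tm := σ'.map (applyG σ)

/-- Composition of local substitutions: apply `δ` to every component of `δ'`. -/
def lcomp (δ' δ : List Tm) : List Tm := δ'.map (applyL δ)

/-- A dual substitution `Ψ; Γ ⊢ (σ; δ) : (Φ; Δ)`: a pair of a global substitution
`Ψ ⊢ σ : Φ` and a local substitution `Ψ; Γ ⊢ δ : Δ`. -/
def DualTy (Ψ Γ : List Ty) (σ δ : List Tm) (Φ Δ : List Ty) : Prop :=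
  GSubTy Ψ σ Φ ∧ LSubTy Ψ Γ δ Δ


/-!
The composite is typed componentwise. The global part and `δ'[σ]` are handled by the global
substitution lemma, which must therefore hold at both layers and in an arbitrary local context:
a global variable is replaced by a closed layer-0 term, which is then promoted to layer 1 and
weakened into the local context. The local part then follows from the local substitution lemma.
Pushing a substitution under a binder needs shifted substitutions to stay well typed, which is
an instance of a single renaming lemma.
-/

lemma Core.type1 {T : Ty} (h : Core T) : Type1 T := by
  induction h with
  | nat => exact .nat
  | arr _ _ ihS ihT => exact .arr ihS ihT

lemma CoreCtx.type1Ctx {Γ : List Ty} (h : CoreCtx Γ) : Type1Ctx Γ :=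
  fun T hT => (h T hT).type1

lemma coreCtx_cons {S : Ty} {Γ : List Ty} : CoreCtx (S :: Γ) ↔ Core S ∧ CoreCtx Γ :=
  List.forall_mem_cons

-- `LayerCtx 0` and `LayerCtx 1` unfold to `CoreCtx` and `Type1Ctx`, the side conditions of the
-- layer-0 and layer-1 rules, so the structural lemmas below can be stated once for both layers.
def LayerTy : Fin 2 → Ty → Prop
  | 0 => Core
  | 1 => Type1

def LayerCtx (i : Fin 2) (Γ : List Ty) : Prop := ∀ T ∈ Γ, LayerTy i T

lemma layerCtx_cons {i : Fin 2} {S : Ty} {Γ : List Ty} :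
    LayerCtx i (S :: Γ) ↔ LayerTy i S ∧ LayerCtx i Γ :=
  List.forall_mem_cons

lemma layerCtx_nil (i : Fin 2) : LayerCtx i [] := by
  simp [LayerCtx]

lemma getElem?_liftR {α : Type*} {Γ Γ' : List α} {f : ℕ → ℕ}
    (h : ∀ x a, Γ[x]? = some a → Γ'[f x]? = some a) {S : α} :
    ∀ x a, (S :: Γ)[x]? = some a → (S :: Γ')[liftR f x]? = some a
  | 0, _, hx => hx
  | x + 1, a, hx => h x a hx

@[simp] lemma liftR_id : liftR id = id := by
  funext x; cases x <;> rfl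

@[simp] lemma rename_id (t : Tm) : rename id id t = t := by
  induction t <;> simp_all [rename]

namespace Typing

lemma coreCtx {Ψ Γ : List Ty} {i : Fin 2} {t : Tm} {T : Ty} (h : Typing Ψ Γ i t T) :
    CoreCtx Ψ := by
  induction h with
  | var0 hΨ | var1 hΨ | gvar0 hΨ | gvar1 hΨ | zero0 hΨ | zero1 hΨ => exact hΨ
  | succ _ ih | lam _ ih | app _ _ ih | box _ _ ih | letbox _ _ ih => exact ih

lemma layerCtx {Ψ Γ : List Ty} {i : Fin 2} {t : Tm} {T : Ty} (h : Typing Ψ Γ i t T) :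
    LayerCtx i Γ := by
  induction h with
  | var0 _ hΓ | var1 _ hΓ | gvar0 _ hΓ | gvar1 _ hΓ | zero0 _ hΓ | zero1 _ hΓ | box hΓ =>
    exact hΓ
  | succ _ ih | app _ _ ih | letbox _ _ ih => exact ih
  | lam _ ih => exact (layerCtx_cons.1 ih).2

lemma map_rename {Ψ Γ : List Ty} {i : Fin 2} {t : Tm} {T : Ty} (h : Typing Ψ Γ i t T)
    {Ψ' Γ' : List Ty} {g l : ℕ → ℕ} (hΨ' : CoreCtx Ψ') (hΓ' : LayerCtx i Γ')
    (hg : ∀ u U, Ψ[u]? = some U → Ψ'[g u]? = some U)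
    (hl : ∀ x U, Γ[x]? = some U → Γ'[l x]? = some U) :
    Typing Ψ' Γ' i (rename g l t) T := by
  induction h generalizing Ψ' Γ' g l with
  | var0 _ _ hx => exact .var0 hΨ' hΓ' (hl _ _ hx)
  | var1 _ _ hx => exact .var1 hΨ' hΓ' (hl _ _ hx)
  | gvar0 _ _ hu => exact .gvar0 hΨ' hΓ' (hg _ _ hu)
  | gvar1 _ _ hu => exact .gvar1 hΨ' hΓ' (hg _ _ hu)
  | zero0 => exact .zero0 hΨ' hΓ'
  | zero1 => exact .zero1 hΨ' hΓ'
  | succ _ ih => exact .succ (ih hΨ' hΓ' hg hl)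
  | lam ht ih =>
    have hS := (layerCtx_cons.1 ht.layerCtx).1
    exact .lam (ih hΨ' (layerCtx_cons.2 ⟨hS, hΓ'⟩) hg (getElem?_liftR hl))
  | app _ _ ih₁ ih₂ => exact .app (ih₁ hΨ' hΓ' hg hl) (ih₂ hΨ' hΓ' hg hl)
  | box _ _ ih => exact .box hΓ' (ih hΨ' (layerCtx_nil 0) hg (by simp))
  | letbox _ ht ih₁ ih₂ =>
    have hT := (coreCtx_cons.1 ht.coreCtx).1
    exact .letbox (ih₁ hΨ' hΓ' hg hl)
      (ih₂ (coreCtx_cons.2 ⟨hT, hΨ'⟩) hΓ' (getElem?_liftR hg) hl)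

lemma gshift {Ψ Γ : List Ty} {i : Fin 2} {t : Tm} {T S : Ty} (h : Typing Ψ Γ i t T)
    (hS : Core S) : Typing (S :: Ψ) Γ i (gshift 0 t) T :=
  h.map_rename (coreCtx_cons.2 ⟨hS, h.coreCtx⟩) h.layerCtx (by simp [shiftFn]) (by simp)

lemma lshift {Ψ Γ : List Ty} {i : Fin 2} {t : Tm} {T S : Ty} (h : Typing Ψ Γ i t T)
    (hS : LayerTy i S) : Typing Ψ (S :: Γ) i (lshift 0 t) T :=
  h.map_rename h.coreCtx (layerCtx_cons.2 ⟨hS, h.layerCtx⟩) (by simp) (by simp [shiftFn])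

lemma weaken_nil {Ψ Γ : List Ty} {i : Fin 2} {t : Tm} {T : Ty} (h : Typing Ψ [] i t T)
    (hΓ : LayerCtx i Γ) : Typing Ψ Γ i t T := by
  simpa using h.map_rename (g := id) (l := id) h.coreCtx hΓ (fun _ _ hu => hu) (by simp)

lemma layer_one {Ψ Γ : List Ty} {t : Tm} {T : Ty} (h : Typing Ψ Γ 0 t T) :
    Typing Ψ Γ 1 t T := by
  generalize hi : (0 : Fin 2) = i at h
  induction h with
  | var0 hΨ hΓ hx => exact .var1 hΨ hΓ.type1Ctx hx
  | gvar0 hΨ hΓ hu => exact .gvar1 hΨ hΓ.type1Ctx hu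
  | zero0 hΨ hΓ => exact .zero1 hΨ hΓ.type1Ctx
  | succ _ ih => exact .succ (ih hi)
  | lam _ ih => exact .lam (ih hi)
  | app _ _ ih₁ ih₂ => exact .app (ih₁ hi) (ih₂ hi)
  | var1 | gvar1 | zero1 | box | letbox => exact absurd hi (by decide)

end Typing

namespace GSubTy

lemma coreCtx {Ψ Φ : List Ty} {σ : List Tm} (h : GSubTy Ψ σ Φ) : CoreCtx Ψ := by
  induction h with
  | nil hΨ => exact hΨ
  | cons _ _ ih => exact ih

lemma typing_lookupT {Ψ Φ : List Ty} {σ : List Tm} (h : GSubTy Ψ σ Φ) {u : ℕ} {T : Ty}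
    (hu : Φ[u]? = some T) (d : Tm) : Typing Ψ [] 0 (lookupT σ u d) T := by
  induction h generalizing u with
  | nil => simp at hu
  | cons _ ht ih =>
    cases u with
    | zero => cases hu; exact ht
    | succ u => exact ih hu

lemma map {Ψ Ψ' Φ : List Ty} {σ : List Tm} {f : Tm → Tm} (h : GSubTy Ψ σ Φ)
    (hΨ' : CoreCtx Ψ') (hf : ∀ {t T}, Typing Ψ [] 0 t T → Typing Ψ' [] 0 (f t) T) :
    GSubTy Ψ' (σ.map f) Φ := by
  induction h with
  | nil => exact .nil hΨ'
  | cons _ ht ih => exact .cons ih (hf ht)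

lemma lift {Ψ Φ : List Ty} {σ : List Tm} {T : Ty} (h : GSubTy Ψ σ Φ) (hT : Core T) :
    GSubTy (T :: Ψ) (.gvar 0 :: σ.map (gshift 0)) (T :: Φ) :=
  have hTΨ : CoreCtx (T :: Ψ) := coreCtx_cons.2 ⟨hT, h.coreCtx⟩
  .cons (h.map hTΨ (·.gshift hT)) (.gvar0 hTΨ (layerCtx_nil 0) rfl)

end GSubTy

lemma Typing.gsubst {Φ Γ : List Ty} {i : Fin 2} {t : Tm} {T : Ty} (h : Typing Φ Γ i t T)
    {Ψ : List Ty} {σ : List Tm} (hσ : GSubTy Ψ σ Φ) : Typing Ψ Γ i (applyG σ t) T := by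
  induction h generalizing Ψ σ with
  | var0 _ hΓ hx => exact .var0 hσ.coreCtx hΓ hx
  | var1 _ hΓ hx => exact .var1 hσ.coreCtx hΓ hx
  | gvar0 _ hΓ hu => exact (hσ.typing_lookupT hu _).weaken_nil hΓ
  | gvar1 _ hΓ hu => exact (hσ.typing_lookupT hu _).layer_one.weaken_nil hΓ
  | zero0 _ hΓ => exact .zero0 hσ.coreCtx hΓ
  | zero1 _ hΓ => exact .zero1 hσ.coreCtx hΓ
  | succ _ ih => exact .succ (ih hσ)
  | lam _ ih => exact .lam (ih hσ)
  | app _ _ ih₁ ih₂ => exact .app (ih₁ hσ) (ih₂ hσ)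
  | box hΓ _ ih => exact .box hΓ (ih hσ)
  | letbox _ ht ih₁ ih₂ =>
    exact .letbox (ih₁ hσ) (ih₂ (hσ.lift (coreCtx_cons.1 ht.coreCtx).1))

namespace LSubTy

lemma coreCtx {Ψ Γ Δ : List Ty} {δ : List Tm} (h : LSubTy Ψ Γ δ Δ) : CoreCtx Ψ := by
  induction h with
  | nil hΨ => exact hΨ
  | cons _ _ ih => exact ih

lemma type1Ctx {Ψ Γ Δ : List Ty} {δ : List Tm} (h : LSubTy Ψ Γ δ Δ) : Type1Ctx Γ := by
  induction h with
  | nil _ hΓ => exact hΓ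
  | cons _ _ ih => exact ih

lemma typing_lookupT {Ψ Γ Δ : List Ty} {δ : List Tm} (h : LSubTy Ψ Γ δ Δ) {x : ℕ} {T : Ty}
    (hx : Δ[x]? = some T) (d : Tm) : Typing Ψ Γ 1 (lookupT δ x d) T := by
  induction h generalizing x with
  | nil => simp at hx
  | cons _ ht ih =>
    cases x with
    | zero => cases hx; exact ht
    | succ x => exact ih hx

lemma map {Ψ Ψ' Γ Γ' Δ : List Ty} {δ : List Tm} {f : Tm → Tm} (h : LSubTy Ψ Γ δ Δ)
    (hΨ' : CoreCtx Ψ') (hΓ' : Type1Ctx Γ')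
    (hf : ∀ {t T}, Typing Ψ Γ 1 t T → Typing Ψ' Γ' 1 (f t) T) :
    LSubTy Ψ' Γ' (δ.map f) Δ := by
  induction h with
  | nil => exact .nil hΨ' hΓ'
  | cons _ ht ih => exact .cons ih (hf ht)

lemma lift {Ψ Γ Δ : List Ty} {δ : List Tm} {S : Ty} (h : LSubTy Ψ Γ δ Δ) (hS : Type1 S) :
    LSubTy Ψ (S :: Γ) (.var 0 :: δ.map (lshift 0)) (S :: Δ) :=
  have hSΓ : Type1Ctx (S :: Γ) := layerCtx_cons (i := 1) |>.2 ⟨hS, h.type1Ctx⟩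
  .cons (h.map h.coreCtx hSΓ (·.lshift hS)) (.var1 h.coreCtx hSΓ rfl)

end LSubTy

lemma Typing.lsubst {Ψ Δ : List Ty} {t : Tm} {T : Ty} (h : Typing Ψ Δ 1 t T)
    {Γ : List Ty} {δ : List Tm} (hδ : LSubTy Ψ Γ δ Δ) : Typing Ψ Γ 1 (applyL δ t) T := by
  generalize hi : (1 : Fin 2) = i at h
  induction h generalizing Γ δ with
  | var1 _ _ hx => exact hδ.typing_lookupT hx _
  | gvar1 hΨ _ hu => exact .gvar1 hΨ hδ.type1Ctx hu
  | zero1 hΨ _ => exact .zero1 hΨ hδ.type1Ctx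
  | succ _ ih => exact .succ (ih hδ hi)
  | lam ht ih =>
    subst hi
    exact .lam (ih (hδ.lift (layerCtx_cons.1 ht.layerCtx).1) rfl)
  | app _ _ ih₁ ih₂ => exact .app (ih₁ hδ hi) (ih₂ hδ hi)
  -- boxed terms are locally closed, so `applyL` leaves them alone
  | box _ ht => exact .box hδ.type1Ctx ht
  | letbox _ ht ih₁ ih₂ =>
    have hT := (coreCtx_cons.1 ht.coreCtx).1
    exact .letbox (ih₁ hδ hi) (ih₂ (hδ.map (coreCtx_cons.2 ⟨hT, hδ.coreCtx⟩) hδ.type1Ctx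
      (·.gshift hT)) hi)
  | var0 | gvar0 | zero0 => exact absurd hi (by decide)

/-- Composition of simultaneous dual-context substitutions is well-typed:
if `Ψ'; Γ' ⊢ (σ'; δ') : (Ψ''; Γ'')` and `Ψ; Γ ⊢ (σ; δ) : (Ψ'; Γ')`, then
`Ψ; Γ ⊢ (σ' ∘ σ ; (δ'[σ]) ∘ δ) : (Ψ''; Γ'')`. -/
theorem dual_subst_comp :
    ∀ {Ψ Γ Ψ' Γ' Ψ'' Γ'' : List Ty} {σ δ σ' δ' : List Tm},
    DualTy Ψ' Γ' σ' δ' Ψ'' Γ'' → DualTy Ψ Γ σ δ Ψ' Γ' →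
    DualTy Ψ Γ (gcomp σ' σ) (lcomp (δ'.map (applyG σ)) δ) Ψ'' Γ'' := by
  rintro Ψ Γ Ψ' Γ' Ψ'' Γ'' σ δ σ' δ' ⟨hσ', hδ'⟩ ⟨hσ, hδ⟩
  have hδ'σ : LSubTy Ψ Γ' (δ'.map (applyG σ)) Γ'' :=
    hδ'.map hσ.coreCtx hδ'.type1Ctx (·.gsubst hσ)
  exact ⟨hσ'.map hσ.coreCtx (·.gsubst hσ), hδ'σ.map hδ.coreCtx hδ.type1Ctx (·.lsubst hδ)⟩
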